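/- Let A and A' be as follows: A' is the integral closure of a complete one-dimensional local Noetherian domain A over a field k of characteristic zero, so A' is a complete DVR with maximal ideal m' and uniformizer t. Let ∂ be a p-derivation of K(A) with p ≥ 2 (skew-symmetric p-linear over k, satisfying the Leibniz rule in each argument) such that ∂(A,…,A) ⊆ A and ∂(a,x₂,…,x_p) ∈ A' for all a ∈ A and x₂,…,x_p ∈ A'. If x₁ is an element of a coefficient field k_{A'} ⊆ A' that is finite and separable over a coefficient field k_A ⊆ A, and x₂,…,x_p ∈ k_{A'} ∪ {t}, then ∂(x₁,…,x_p) ∈ A'. -/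

import Mathlib

/-!
Differentiating a separable equation `P(x₁) = 0` with coefficients `aᵢ ∈ k_A` gives
`0 = P'(x₁) dx₁ + Σ x₁ⁱ daᵢ`, hence, after wedging with `dx₂ ∧ ⋯ ∧ dx_p` and applying `∂`,
`P'(x₁) ∂(x₁,…,x_p) = -Σ x₁ⁱ ∂(aᵢ, x₂,…,x_p)`. Each term on the right lies in `A'`, and
`P'(x₁)` is a nonzero element of the field `k_{A'} ⊆ A'`, so it is a unit of `A'`.
-/

/-- dx₁ ∧ ⋯ ∧ dx_p in the `p`-th exterior power of Kähler differentials. -/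
noncomputable def wedgeDiff (k A : Type) [CommRing k] [CommRing A] [Algebra k A]
    (p : ℕ) (a : Fin p → A) : ⋀[A]^p (Ω[A⁄k]) :=
  ⟨ExteriorAlgebra.ιMulti A p (fun i => KaehlerDifferential.D k A (a i)),
   ExteriorAlgebra.ιMulti_range A p (Set.mem_range_self _)⟩

open Polynomial

theorem Polynomial.coeff_derivative_mem {R S : Type*} [Semiring R] [SetLike S R]
    [SubsemiringClass S R] {s : S} {P : R[X]} (hP : ∀ n, P.coeff n ∈ s) (n : ℕ) :
    (derivative P).coeff n ∈ s := by
  rw [coeff_derivative]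
  exact mul_mem (hP _) (add_mem (natCast_mem s n) (one_mem s))

theorem Polynomial.eval_mem_of_coeff_mem {R S : Type*} [Semiring R] [SetLike S R]
    [SubsemiringClass S R] {s : S} {P : R[X]} (hP : ∀ n, P.coeff n ∈ s) {x : R} (hx : x ∈ s) :
    P.eval x ∈ s := by
  rw [eval_eq_sum_range]
  exact sum_mem fun n _ => mul_mem (hP n) (pow_mem hx n)

theorem Derivation.apply_eval_eq_sum {R A M : Type*} [CommRing R] [CommRing A] [Algebra R A]
    [AddCommGroup M] [Module A M] [Module R M] (d : Derivation R A M) (P : A[X]) (x : A) :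
    d (P.eval x) = (derivative P).eval x • d x + ∑ n ∈ P.support, x ^ n • d (P.coeff n) := by
  rw [d.apply_eval_eq, add_comm, PolynomialModule.eval_apply]
  congr 1
  refine Finsupp.sum_of_support_subset _ (fun n hn => ?_) _ (fun _ _ => smul_zero _)
  simp only [Finsupp.mem_support_iff, mem_support_iff] at hn ⊢
  exact fun h => hn (by simp [h])

theorem MultilinearMap.map_update_derivation_eval {R A M N ι : Type*} [CommRing R] [CommRing A]
    [Algebra R A] [AddCommGroup M] [Module A M] [Module R M] [AddCommGroup N] [Module A N]
    [DecidableEq ι] (f : MultilinearMap A (fun _ : ι => M) N) (d : Derivation R A M)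
    (x : ι → A) (i : ι) (P : A[X]) :
    f (Function.update (d ∘ x) i (d (P.eval (x i)))) =
      (derivative P).eval (x i) • f (d ∘ x) +
        ∑ n ∈ P.support, x i ^ n • f (d ∘ Function.update x i (P.coeff n)) := by
  have hself : Function.update (d ∘ x) i (d (x i)) = d ∘ x := Function.update_eq_self i _
  rw [← f.toLinearMap_apply, d.apply_eval_eq_sum, map_add, map_smul, _root_.map_sum]
  simp only [MultilinearMap.toLinearMap_apply, map_smul, hself, Function.comp_update]

theorem map_wedgeDiff_eq_of_simple_root {k K : Type} [CommRing k] [Field K] [Algebra k K] {p : ℕ}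
    (D : ⋀[K]^p (Ω[K⁄k]) →ₗ[K] K) (x : Fin p → K) (i : Fin p) {P : K[X]}
    (hroot : P.eval (x i) = 0) (hsimple : (derivative P).eval (x i) ≠ 0) :
    D (wedgeDiff k K p x) = -((derivative P).eval (x i))⁻¹ *
      ∑ n ∈ P.support, x i ^ n * D (wedgeDiff k K p (Function.update x i (P.coeff n))) := by
  have key := ((D.compAlternatingMap (exteriorPower.ιMulti K p)).toMultilinearMap
    ).map_update_derivation_eval (KaehlerDifferential.D k K) x i P
  simp only [hroot, map_zero, MultilinearMap.map_update_zero] at key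
  change 0 = _ * D (wedgeDiff k K p x) +
    ∑ n ∈ P.support, x i ^ n * D (wedgeDiff k K p (Function.update x i (P.coeff n))) at key
  field_simp
  linear_combination -key

theorem statement3_general
    (k : Type) [Field k]
    (A : Type) [CommRing A]
    (K : Type) [Field K] [Algebra A K]
    [Algebra k K]
    -- `t` is a uniformizer of `A'`
    (t : K) (ht : t ∈ integralClosure A K)
    -- coefficient fields `k_A ⊆ A` and `k_{A'} ⊆ A'` with `k_A ⊆ k_{A'}`
    (kA kA' : Subfield K)
    (hkA : (kA : Set K) ⊆ Set.range (algebraMap A K))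
    (hkA' : (kA' : Set K) ⊆ (integralClosure A K : Set K))
    (hle : kA ≤ kA')
    -- `k_{A'}` is finite and separable over `k_A`: every element of `k_{A'}` is a simple
    -- root of a polynomial with coefficients in `k_A`
    (hsep : ∀ x ∈ kA', ∃ P : Polynomial K, (∀ n, P.coeff n ∈ kA) ∧
      P.eval x = 0 ∧ (Polynomial.derivative P).eval x ≠ 0)
    (p : ℕ)
    -- the `p`-derivation `∂` of `K` over `k`
    (D : ⋀[K]^p (Ω[K⁄k]) →ₗ[K] K)
    -- `∂(a, x₂,…,x_p) ∈ A'` for `a ∈ A` and `x₂,…,x_p ∈ A'`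
    (hDA' : ∀ x : Fin p → K, (∀ i : Fin p, (i : ℕ) = 0 → x i ∈ Set.range (algebraMap A K)) →
      (∀ i : Fin p, (i : ℕ) ≠ 0 → x i ∈ integralClosure A K) →
      D (wedgeDiff k K p x) ∈ integralClosure A K) :
    ∀ x : Fin p → K, (∀ i : Fin p, (i : ℕ) = 0 → x i ∈ kA') →
      (∀ i : Fin p, (i : ℕ) ≠ 0 → x i ∈ kA' ∨ x i = t) →
      D (wedgeDiff k K p x) ∈ integralClosure A K := by
  intro x hx₁ hx
  rcases p with _ | p
  · exact hDA' x finZeroElim finZeroElim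
  have hx₁' : x 0 ∈ kA' := hx₁ 0 rfl
  obtain ⟨P, hPk, hroot, hsimple⟩ := hsep (x 0) hx₁'
  have hPk' : ∀ n, P.coeff n ∈ kA' := fun n => hle (hPk n)
  have hc : ((derivative P).eval (x 0))⁻¹ ∈ integralClosure A K :=
    hkA' (inv_mem (eval_mem_of_coeff_mem (coeff_derivative_mem hPk') hx₁'))
  have hterm : ∀ n, D (wedgeDiff k K (p + 1) (Function.update x 0 (P.coeff n))) ∈
      integralClosure A K := by
    intro n
    refine hDA' _ (fun j hj => ?_) (fun j hj => ?_)
    · rw [show j = 0 from Fin.ext hj, Function.update_self]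
      exact hkA (hPk n)
    · rw [Function.update_of_ne (fun h => hj (by rw [h]; rfl))]
      rcases hx j hj with hj' | rfl
      exacts [hkA' hj', ht]
  rw [map_wedgeDiff_eq_of_simple_root D x 0 hroot hsimple]
  exact mul_mem (neg_mem hc) (sum_mem fun n _ => mul_mem (pow_mem (hkA' hx₁') n) (hterm n))

theorem statement3
    (k : Type) [Field k] [CharZero k]
    (A : Type) [CommRing A] [IsDomain A] [IsLocalRing A] [IsNoetherianRing A] [Algebra k A]
    -- `A` is one-dimensional and complete
    (hdim : Ring.DimensionLEOne A) (hnotfield : ¬ IsField A)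
    [IsAdicComplete (IsLocalRing.maximalIdeal A) A]
    (K : Type) [Field K] [Algebra A K] [IsFractionRing A K]
    [Algebra k K] [IsScalarTower k A K]
    -- the integral closure `A'` of `A` in `K` is a (complete) DVR
    (hDVR : IsDiscreteValuationRing (integralClosure A K))
    -- `t` is a uniformizer of `A'`
    (t : K) (ht : t ∈ integralClosure A K)
    (htu : Irreducible (⟨t, ht⟩ : integralClosure A K))
    -- coefficient fields `k_A ⊆ A` and `k_{A'} ⊆ A'` with `k_A ⊆ k_{A'}`
    (kA kA' : Subfield K)
    (hkA : (kA : Set K) ⊆ Set.range (algebraMap A K))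
    (hkA' : (kA' : Set K) ⊆ (integralClosure A K : Set K))
    (hle : kA ≤ kA')
    -- `k_{A'}` is finite and separable over `k_A`: every element of `k_{A'}` is a simple
    -- root of a polynomial with coefficients in `k_A`
    (hsep : ∀ x ∈ kA', ∃ P : Polynomial K, (∀ n, P.coeff n ∈ kA) ∧
      P.eval x = 0 ∧ (Polynomial.derivative P).eval x ≠ 0)
    (p : ℕ) (hp : 2 ≤ p)
    -- the `p`-derivation `∂` of `K` over `k`
    (D : ⋀[K]^p (Ω[K⁄k]) →ₗ[K] K)
    -- `∂(A,…,A) ⊆ A`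
    (hDA : ∀ x : Fin p → K, (∀ i, x i ∈ Set.range (algebraMap A K)) →
      D (wedgeDiff k K p x) ∈ Set.range (algebraMap A K))
    -- `∂(a, x₂,…,x_p) ∈ A'` for `a ∈ A` and `x₂,…,x_p ∈ A'`
    (hDA' : ∀ x : Fin p → K, (∀ i : Fin p, (i : ℕ) = 0 → x i ∈ Set.range (algebraMap A K)) →
      (∀ i : Fin p, (i : ℕ) ≠ 0 → x i ∈ integralClosure A K) →
      D (wedgeDiff k K p x) ∈ integralClosure A K) :
    ∀ x : Fin p → K, (∀ i : Fin p, (i : ℕ) = 0 → x i ∈ kA') →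
      (∀ i : Fin p, (i : ℕ) ≠ 0 → x i ∈ kA' ∨ x i = t) →
      D (wedgeDiff k K p x) ∈ integralClosure A K :=
  statement3_general k A K t ht kA kA' hkA hkA' hle hsep p D hDA'
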